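/- arXiv:1904.07375 — 3 statements merged into one kernel-verified Lean document; each statement's English description precedes it below -/
import Mathlib

section
/- Let (X_j) be simple random walk on ℤ started at 0, and let x(n) be a sequence with x(n) → ∞ and x(n) = o(√n) as n → ∞. Then lim_{n→∞} (x(n)²/n) · log P( max_{j≤n} |X_j| ≤ x(n) ) = −π²/8. -/
open MeasureTheory ProbabilityTheory Filter Real
open scoped ENNReal NNReal

noncomputable section

instance : MeasurableSpace (List ℕ) := ⊤

/-- Ulam–Harris rooted trees; a vertex is encoded as the reversed list of the child
indices along the path from the root (so the parent of `i :: v` is `v`, and the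
root is `[]`).  The children of a vertex are labelled `0, 1, …`, and the set of
children of every vertex is finite. -/
structure GWTree where
  mem : List ℕ → Prop
  root_mem : mem []
  parent_mem : ∀ i v, mem (i :: v) → mem v
  sibling_mem : ∀ i j v, mem (i :: v) → j ≤ i → mem (j :: v)
  fin_children : ∀ v, {i | mem (i :: v)}.Finite

namespace GWTree

/-- The number of children of `v` in `T`. -/
def deg (T : GWTree) (v : List ℕ) : ℕ := (T.fin_children v).toFinset.card

/-- Transition probabilities of the simple random walk on `T`: from a vertex `u` the
walk moves to a uniformly chosen neighbour of `u` (its parent `u.tail`, if `u` is not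
the root, or one of its children `i :: u`). -/
def step (T : GWTree) (u v : List ℕ) : ℝ≥0∞ := by
  classical
  exact if (u ≠ [] ∧ v = u.tail) ∨ (∃ i, v = i :: u ∧ T.mem v) then
    ((T.deg u + (if u = [] then 0 else 1) : ℕ) : ℝ≥0∞)⁻¹
  else 0

end GWTree

instance : MeasurableSpace GWTree :=
  MeasurableSpace.comap (fun T : GWTree => T.mem) inferInstance

/-- The tree generated by an assignment `f` of numbers of children to the potential
vertices: `i :: v` is a vertex iff `v` is a vertex and `i < f v`. -/
def genMem (f : List ℕ → ℕ) : List ℕ → Prop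
  | [] => True
  | i :: v => genMem f v ∧ i < f v

/-- The Galton–Watson tree built from the offspring data `f`. -/
def genTree (f : List ℕ → ℕ) : GWTree where
  mem := genMem f
  root_mem := trivial
  parent_mem := fun _ _ h => h.1
  sibling_mem := fun _ _ _ h hj => ⟨h.1, lt_of_le_of_lt hj h.2⟩
  fin_children := fun v => (Set.finite_Iio (f v)).subset fun _ hi => hi.2

/-- `GW` is the Galton–Watson measure with offspring distribution `ν`: the image of an
i.i.d. family (indexed by the potential vertices) of `ν`-distributed offspring numbers
under the map generating the corresponding tree. -/
def IsGW (ν : Measure ℕ) (GW : Measure GWTree) : Prop :=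
  ∃ (Ω : Type) (_ : MeasurableSpace Ω) (P : Measure Ω),
    IsProbabilityMeasure P ∧
    ∃ ξ : List ℕ → Ω → ℕ,
      iIndepFun ξ P ∧ (∀ v, Measurable (ξ v)) ∧
      (∀ v, P.map (ξ v) = ν) ∧
      GW = P.map fun ω => genTree fun v => ξ v ω

/-- `P` is the law of the simple random walk on `T` started at `v₀`, characterised
through its finite-dimensional distributions. -/
def IsSRWFrom (T : GWTree) (v₀ : List ℕ) (P : Measure (ℕ → List ℕ)) : Prop :=
  IsProbabilityMeasure P ∧
  ∀ (x : ℕ → List ℕ) (n : ℕ),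
    P {ω | ∀ j ≤ n, ω j = x j} =
      (if x 0 = v₀ then 1 else 0) * ∏ j ∈ Finset.range n, T.step (x j) (x (j + 1))

/-- `P` is the law of the simple random walk on `T` started at the root. -/
def IsSRW (T : GWTree) (P : Measure (ℕ → List ℕ)) : Prop := IsSRWFrom T ([] : List ℕ) P

/-- The maximal displacement (distance from the root) of the path `ω` up to time `n`. -/
def maxDisp (n : ℕ) (ω : ℕ → List ℕ) : ℕ :=
  (Finset.range (n + 1)).sup fun j => (ω j).length

/-- The event that the tree `T` survives (is infinite). -/
def survives (T : GWTree) : Prop := {v | T.mem v}.Infinite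

/-- `P` is the law of the simple random walk on `ℤ` started at `0`, characterised through
its finite-dimensional distributions (each step is uniform on `{-1, +1}`). -/
def IsSRWZ (P : Measure (ℕ → ℤ)) : Prop :=
  IsProbabilityMeasure P ∧
  ∀ (x : ℕ → ℤ) (n : ℕ),
    P {ω | ∀ j ≤ n, ω j = x j} =
      (if x 0 = 0 then 1 else 0) *
        ∏ j ∈ Finset.range n,
          (if x (j + 1) - x j = 1 ∨ x (j + 1) - x j = -1 then (2 : ℝ≥0∞)⁻¹ else 0)


/-!
Staying in `[-m, m]` up to time `n` has probability `∑ⱼ (δ₀ Kₘⁿ) j`, where `Kₘ` is the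
transition kernel of the walk killed on leaving `[-m, m]`. With `θₘ = π / (2m + 2)`, the
function `i ↦ cos (θₘ i)` vanishes at `±(m + 1)`, so it is a positive eigenvector of `Kₘ` with
eigenvalue `cos θₘ`. Pairing `δ₀ Kₘⁿ` with it gives `cos θₘ ^ n ≤ P(stay in [-m, m])`, since
`cos ≤ 1`; pairing instead with the eigenvector of a wider interval `[-M, M]`, which is at least
`cos (θ_M m) > 0` on `[-m, m]`, gives `P(stay in [-m, m]) ≤ cos θ_M ^ n / cos (θ_M m)`.
Take `m = ⌊x⌋` and `M = ⌊s x⌋` with `s > 1`. Since `log cos θ ∼ -θ² / 2`, the two bounds give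
`lim inf ≥ -π² / 8` and `lim sup ≤ -π² / (8 s²)`. The constant `cos (θ_M m) ≥ cos (π / (2s))`
disappears because `x² / n → 0`.
-/

open Finset Topology

section VecMulOn

variable {ι : Type*} (s : Finset ι) (K : ι → ι → ℝ)

/-- One step of the chain with kernel `K` killed on leaving `s`, acting on row vectors; only the
values on `s` are meaningful. -/
def vecMulOn (v : ι → ℝ) (j : ι) : ℝ := ∑ i ∈ s, v i * K i j

variable {s K}

lemma vecMulOn_mono (hK : ∀ i j, 0 ≤ K i j) {v w : ι → ℝ} (hvw : v ≤ w) :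
    vecMulOn s K v ≤ vecMulOn s K w :=
  fun j => sum_le_sum fun i _ => mul_le_mul_of_nonneg_right (hvw i) (hK i j)

lemma vecMulOn_le_of_subset {t : Finset ι} (hst : s ⊆ t) (hK : ∀ i j, 0 ≤ K i j) {v : ι → ℝ}
    (hv : 0 ≤ v) : vecMulOn s K v ≤ vecMulOn t K v :=
  fun j => sum_le_sum_of_subset_of_nonneg hst fun i _ _ => mul_nonneg (hv i) (hK i j)

lemma iterate_vecMulOn_nonneg (hK : ∀ i j, 0 ≤ K i j) {v : ι → ℝ} (hv : 0 ≤ v) (n : ℕ) :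
    0 ≤ (vecMulOn s K)^[n] v := by
  induction n with
  | zero => exact hv
  | succ n ih =>
    rw [Function.iterate_succ_apply']
    exact fun j => sum_nonneg fun i _ => mul_nonneg (ih i) (hK i j)

lemma iterate_vecMulOn_le_of_subset {t : Finset ι} (hst : s ⊆ t) (hK : ∀ i j, 0 ≤ K i j)
    {v : ι → ℝ} (hv : 0 ≤ v) (n : ℕ) : (vecMulOn s K)^[n] v ≤ (vecMulOn t K)^[n] v := by
  induction n with
  | zero => exact le_rfl
  | succ n ih =>
    rw [Function.iterate_succ_apply', Function.iterate_succ_apply']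
    exact (vecMulOn_le_of_subset hst hK (iterate_vecMulOn_nonneg hK hv n)).trans
      (vecMulOn_mono hK ih)

lemma sum_iterate_vecMulOn_mul_eigenvector {φ : ι → ℝ} {c : ℝ}
    (hφ : ∀ i ∈ s, ∑ j ∈ s, K i j * φ j = c * φ i) (v : ι → ℝ) (n : ℕ) :
    ∑ j ∈ s, (vecMulOn s K)^[n] v j * φ j = c ^ n * ∑ i ∈ s, v i * φ i := by
  have step (w : ι → ℝ) : ∑ j ∈ s, vecMulOn s K w j * φ j = c * ∑ i ∈ s, w i * φ i := by
    simp only [vecMulOn, sum_mul, mul_sum]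
    rw [sum_comm]
    refine sum_congr rfl fun i hi => ?_
    rw [mul_left_comm, ← hφ i hi, mul_sum]
    exact sum_congr rfl fun j _ => by ring
  induction n generalizing v with
  | zero => simp
  | succ n ih => rw [Function.iterate_succ_apply, ih, step, pow_succ, mul_assoc]

lemma sum_piFinset_succ_eq_sum_cons {β : Type*} [AddCommMonoid β] {n : ℕ}
    (F : (Fin (n + 1) → ι) → β) :
    ∑ g ∈ Fintype.piFinset (fun _ => s), F g =
      ∑ y ∈ s, ∑ h ∈ Fintype.piFinset (fun _ : Fin n => s), F (Fin.cons y h) := by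
  have := filter_piFinset_eq_map_consEquiv (fun _ : Fin (n + 1) => s) (fun _ => True)
  rw [filter_true_of_mem fun _ _ => trivial, filter_true_of_mem fun _ _ => trivial] at this
  rw [this, sum_map, sum_product]
  rfl

lemma sum_piFinset_mul_prod (v : ι → ℝ) (n : ℕ) :
    ∑ g ∈ Fintype.piFinset (fun _ : Fin (n + 1) => s),
        v (g 0) * ∏ j : Fin n, K (g j.castSucc) (g j.succ) =
      ∑ j ∈ s, (vecMulOn s K)^[n] v j := by
  induction n generalizing v with
  | zero => simp [sum_piFinset_succ_eq_sum_cons]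
  | succ n ih =>
    rw [sum_piFinset_succ_eq_sum_cons, Function.iterate_succ_apply, ← ih, sum_comm]
    refine sum_congr rfl fun h _ => ?_
    simp only [Fin.prod_univ_succ, Fin.cons_zero, Fin.castSucc_zero, Fin.cons_succ,
      ← Fin.succ_castSucc, vecMulOn, sum_mul]
    exact sum_congr rfl fun y _ => by ring

end VecMulOn

lemma tendsto_cos_sub_one_div_sq :
    Tendsto (fun t => (cos t - 1) / t ^ 2) (𝓝[≠] 0) (𝓝 (-1 / 2)) := by
  rw [← tendsto_sub_nhds_zero_iff]
  have hsmall : ∀ᶠ t in 𝓝[≠] (0 : ℝ), |t| ≤ 1 := nhdsWithin_le_nhds <| by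
    filter_upwards [Icc_mem_nhds (by norm_num : (-1 : ℝ) < 0) one_pos] with t ht using abs_le.2 ht
  refine squeeze_zero_norm' ?_ (tendsto_nhdsWithin_of_tendsto_nhds
    (by simpa using ((continuous_pow 2).const_mul (5 / 96 : ℝ)).tendsto 0))
  filter_upwards [hsmall, self_mem_nhdsWithin] with t ht (ht0 : t ≠ 0)
  have ht2 : 0 < t ^ 2 := by positivity
  calc ‖(cos t - 1) / t ^ 2 - -1 / 2‖ = |cos t - (1 - t ^ 2 / 2)| / t ^ 2 := by
        rw [Real.norm_eq_abs, ← abs_of_pos ht2, ← abs_div, abs_of_pos ht2]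
        congr 1
        field_simp
        ring
    _ ≤ |t| ^ 4 * (5 / 96) / t ^ 2 := by gcongr; exact cos_bound ht
    _ = 5 / 96 * t ^ 2 := by
        rw [show |t| ^ 4 = (t ^ 2) ^ 2 by rw [← sq_abs t]; ring]
        field_simp

lemma tendsto_log_cos_div_sq :
    Tendsto (fun t => log (cos t) / t ^ 2) (𝓝[≠] 0) (𝓝 (-1 / 2)) := by
  have hcos : Tendsto cos (𝓝[≠] 0) (𝓝 1) := by
    simpa using (continuous_cos.tendsto 0).mono_left nhdsWithin_le_nhds
  have hpos : ∀ᶠ t in 𝓝[≠] 0, 0 < cos t := hcos.eventually (lt_mem_nhds one_pos)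
  refine tendsto_of_tendsto_of_tendsto_of_le_of_le'
    (by simpa using tendsto_cos_sub_one_div_sq.div hcos one_ne_zero)
    tendsto_cos_sub_one_div_sq ?_ ?_
  · filter_upwards [hpos] with t ht
    change (cos t - 1) / t ^ 2 / cos t ≤ _
    rw [div_right_comm]
    refine div_le_div_of_nonneg_right ?_ (sq_nonneg t)
    calc (cos t - 1) / cos t = 1 - (cos t)⁻¹ := by field_simp
      _ ≤ log (cos t) := one_sub_inv_le_log_of_pos ht
  · filter_upwards [hpos] with t ht
    exact div_le_div_of_nonneg_right (log_le_sub_one_of_pos ht) (sq_nonneg t)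

lemma tendsto_div_natFloor_add_one :
    Tendsto (fun y : ℝ => y / (⌊y⌋₊ + 1)) atTop (𝓝 1) := by
  have h : Tendsto (fun y : ℝ => (⌊y⌋₊ + 1) / y) atTop (𝓝 1) := by
    simpa [add_div] using (tendsto_nat_floor_div_atTop (R := ℝ)).add tendsto_inv_atTop_zero
  simpa using h.inv₀ one_ne_zero

lemma tendsto_sq_div_of_isLittleO_sqrt {x : ℕ → ℝ} (h : x =o[atTop] fun n => √n) :
    Tendsto (fun n => x n ^ 2 / n) atTop (𝓝 0) := by
  have := h.tendsto_div_nhds_zero.pow 2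
  rw [zero_pow two_ne_zero] at this
  exact this.congr fun n => by rw [div_pow, sq_sqrt n.cast_nonneg]

def srwKernel (i j : ℤ) : ℝ := if j - i = 1 ∨ j - i = -1 then 2⁻¹ else 0

lemma srwKernel_nonneg (i j : ℤ) : 0 ≤ srwKernel i j := by
  unfold srwKernel; split_ifs <;> norm_num

lemma ofReal_srwKernel (i j : ℤ) :
    ENNReal.ofReal (srwKernel i j) = if j - i = 1 ∨ j - i = -1 then 2⁻¹ else 0 := by
  unfold srwKernel; split_ifs <;> simp

lemma sum_srwKernel_mul (s : Finset ℤ) (i : ℤ) (f : ℤ → ℝ) :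
    ∑ j ∈ s, srwKernel i j * f j =
      ((if i + 1 ∈ s then f (i + 1) else 0) + (if i - 1 ∈ s then f (i - 1) else 0)) / 2 := by
  have h (j : ℤ) : srwKernel i j * f j =
      (if i + 1 = j then f j / 2 else 0) + (if i - 1 = j then f j / 2 else 0) := by
    unfold srwKernel; split_ifs <;> first | omega | ring
  simp only [h, sum_add_distrib, sum_ite_eq]
  split_ifs <;> ring

lemma iterate_vecMulOn_srwKernel_single_nonneg (s : Finset ℤ) (n : ℕ) :
    0 ≤ (vecMulOn s srwKernel)^[n] (Pi.single 0 1) :=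
  iterate_vecMulOn_nonneg srwKernel_nonneg (Pi.single_nonneg.2 zero_le_one) n

lemma measure_forall_fin_eq {P : Measure (ℕ → ℤ)} (hP : IsSRWZ P) {n : ℕ}
    (g : Fin (n + 1) → ℤ) :
    P {ω | ∀ j : Fin (n + 1), ω j = g j} = ENNReal.ofReal
      ((Pi.single 0 1 : ℤ → ℝ) (g 0) * ∏ j : Fin n, srwKernel (g j.castSucc) (g j.succ)) := by
  set x : ℕ → ℤ := fun j => if h : j < n + 1 then g ⟨j, h⟩ else 0
  have hset : {ω : ℕ → ℤ | ∀ j : Fin (n + 1), ω j = g j} = {ω | ∀ j ≤ n, ω j = x j} := by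
    ext ω
    simp only [Set.mem_ofPred_eq, Fin.forall_iff, Nat.lt_succ_iff]
    exact forall₂_congr fun j hj => by simp only [x, dif_pos (Nat.lt_succ_of_le hj)]
  rw [hset, hP.2 x n, ← Fin.prod_univ_eq_prod_range,
    ENNReal.ofReal_mul (by rw [Pi.single_apply]; positivity),
    ENNReal.ofReal_prod_of_nonneg fun _ _ => srwKernel_nonneg _ _]
  simp [x, ofReal_srwKernel, Pi.single_apply, apply_ite ENNReal.ofReal]
  rfl

lemma measure_forall_mem_eq {P : Measure (ℕ → ℤ)} (hP : IsSRWZ P) (s : Finset ℤ) (n : ℕ) :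
    P {ω | ∀ j ≤ n, ω j ∈ s} =
      ENNReal.ofReal (∑ j ∈ s, (vecMulOn s srwKernel)^[n] (Pi.single 0 1) j) := by
  set restr : (ℕ → ℤ) → (Fin (n + 1) → ℤ) := fun ω j => ω j
  have hrestr : Measurable restr := measurable_pi_lambda _ fun j => measurable_pi_apply _
  have hset : {ω : ℕ → ℤ | ∀ j ≤ n, ω j ∈ s} =
      restr ⁻¹' ↑(Fintype.piFinset fun _ : Fin (n + 1) => s) := by
    ext ω
    simp [restr, Fin.forall_iff]
  rw [hset, ← sum_measure_preimage_singleton _ fun g _ => hrestr (measurableSet_singleton g),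
    ← sum_piFinset_mul_prod, ENNReal.ofReal_sum_of_nonneg]
  · refine sum_congr rfl fun g _ => ?_
    rw [← measure_forall_fin_eq hP g]
    congr 1
    ext ω
    simp [restr, funext_iff]
  · intro g _
    exact mul_nonneg (by rw [Pi.single_apply]; positivity)
      (prod_nonneg fun _ _ => srwKernel_nonneg _ _)

def symmIcc (m : ℕ) : Finset ℤ := Icc (-(m : ℤ)) m

lemma mem_symmIcc {m : ℕ} {i : ℤ} : i ∈ symmIcc m ↔ |i| ≤ m := by
  rw [symmIcc, mem_Icc, abs_le]

lemma mem_symmIcc_floor_iff {r : ℝ} (hr : 0 ≤ r) (i : ℤ) :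
    i ∈ symmIcc ⌊r⌋₊ ↔ |(i : ℝ)| ≤ r := by
  rw [mem_symmIcc, Int.natCast_floor_eq_floor hr, Int.le_floor, Int.cast_abs]

def stayProb (m n : ℕ) : ℝ :=
  ∑ j ∈ symmIcc m, (vecMulOn (symmIcc m) srwKernel)^[n] (Pi.single 0 1) j

lemma toReal_measure_forall_abs_le {P : Measure (ℕ → ℤ)} (hP : IsSRWZ P) {r : ℝ} (hr : 0 ≤ r)
    (n : ℕ) : (P {ω : ℕ → ℤ | ∀ j ≤ n, |(ω j : ℝ)| ≤ r}).toReal = stayProb ⌊r⌋₊ n := by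
  simp only [← mem_symmIcc_floor_iff hr]
  rw [measure_forall_mem_eq hP, ENNReal.toReal_ofReal
    (sum_nonneg fun j _ => iterate_vecMulOn_srwKernel_single_nonneg _ n j)]
  rfl

def dirichletAngle (m : ℕ) : ℝ := π / (2 * m + 2)

lemma dirichletAngle_pos (m : ℕ) : 0 < dirichletAngle m := by
  unfold dirichletAngle; positivity

lemma dirichletAngle_mul_succ (m : ℕ) : dirichletAngle m * (m + 1) = π / 2 := by
  unfold dirichletAngle; field_simp

lemma dirichletAngle_mul_lt {k M : ℕ} (hk : k ≤ M) : dirichletAngle M * k < π / 2 := by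
  rw [← dirichletAngle_mul_succ M]
  gcongr
  · exact dirichletAngle_pos M
  · exact_mod_cast Nat.lt_succ_of_le hk

lemma cos_dirichletAngle_mul_pos {k M : ℕ} (hk : k ≤ M) : 0 < cos (dirichletAngle M * k) :=
  cos_pos_of_mem_Ioo ⟨by linarith [pi_pos, mul_nonneg (dirichletAngle_pos M).le k.cast_nonneg],
    dirichletAngle_mul_lt hk⟩

lemma cos_dirichletAngle_pos {m : ℕ} (hm : 1 ≤ m) : 0 < cos (dirichletAngle m) := by
  simpa using cos_dirichletAngle_mul_pos hm

lemma cos_dirichletAngle_mul_le {k M : ℕ} {i : ℤ} (hi : |i| ≤ k) (hk : k ≤ M) :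
    cos (dirichletAngle M * k) ≤ cos (dirichletAngle M * i) := by
  rw [← cos_abs (dirichletAngle M * i), abs_mul, abs_of_pos (dirichletAngle_pos M),
    ← Int.cast_abs]
  refine cos_le_cos_of_nonneg_of_le_pi
    (mul_nonneg (dirichletAngle_pos M).le (by positivity)) ?_ ?_
  · linarith [dirichletAngle_mul_lt hk, pi_pos]
  · exact mul_le_mul_of_nonneg_left (by exact_mod_cast hi) (dirichletAngle_pos M).le

lemma cos_pi_div_le_cos_dirichletAngle_mul {r s : ℝ} (hr : 0 ≤ r) (hs : 1 ≤ s) :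
    cos (π / (2 * s)) ≤ cos (dirichletAngle ⌊s * r⌋₊ * ⌊r⌋₊) := by
  have hsm : s * ⌊r⌋₊ ≤ ⌊s * r⌋₊ + 1 :=
    (mul_le_mul_of_nonneg_left (Nat.floor_le hr) (by linarith)).trans (Nat.lt_floor_add_one _).le
  refine cos_le_cos_of_nonneg_of_le_pi
    (mul_nonneg (dirichletAngle_pos _).le (Nat.cast_nonneg _)) ?_ ?_
  · rw [div_le_iff₀ (by positivity)]
    nlinarith [pi_pos]
  · unfold dirichletAngle
    rw [div_mul_eq_mul_div, div_le_div_iff₀ (by positivity) (by positivity)]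
    nlinarith [pi_pos]

lemma ite_mem_symmIcc_cos {m : ℕ} {k : ℤ} (hk : |k| ≤ m + 1) :
    (if k ∈ symmIcc m then cos (dirichletAngle m * k) else 0) = cos (dirichletAngle m * k) := by
  split_ifs with h
  · rfl
  · rw [mem_symmIcc] at h
    have : (k : ℝ) = m + 1 ∨ (k : ℝ) = -(m + 1) := by
      rcases abs_le.1 hk with ⟨h₁, h₂⟩
      rcases lt_abs.1 (not_le.1 h) with h₃ | h₃
      · left; exact_mod_cast (by omega : k = m + 1)
      · right; exact_mod_cast (by omega : k = -(m + 1))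
    rcases this with h | h <;>
      simp only [h, mul_neg, cos_neg, dirichletAngle_mul_succ, cos_pi_div_two]

lemma sum_srwKernel_mul_cos {m : ℕ} {i : ℤ} (hi : i ∈ symmIcc m) :
    ∑ j ∈ symmIcc m, srwKernel i j * cos (dirichletAngle m * j) =
      cos (dirichletAngle m) * cos (dirichletAngle m * i) := by
  obtain ⟨h₁, h₂⟩ := abs_le.1 (mem_symmIcc.1 hi)
  rw [sum_srwKernel_mul, ite_mem_symmIcc_cos (abs_le.2 ⟨by omega, by omega⟩),
    ite_mem_symmIcc_cos (abs_le.2 ⟨by omega, by omega⟩)]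
  push_cast
  rw [mul_add, mul_sub, mul_one, cos_add, cos_sub]
  ring

lemma sum_iterate_mul_cos_dirichletAngle (m n : ℕ) :
    ∑ j ∈ symmIcc m, (vecMulOn (symmIcc m) srwKernel)^[n] (Pi.single 0 1) j *
      cos (dirichletAngle m * j) = cos (dirichletAngle m) ^ n := by
  rw [sum_iterate_vecMulOn_mul_eigenvector (fun i hi => sum_srwKernel_mul_cos hi)]
  simp [Pi.single_apply, mem_symmIcc]

lemma cos_dirichletAngle_pow_le_stayProb (m n : ℕ) :
    cos (dirichletAngle m) ^ n ≤ stayProb m n := by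
  rw [← sum_iterate_mul_cos_dirichletAngle]
  exact sum_le_sum fun j _ =>
    mul_le_of_le_one_right (iterate_vecMulOn_srwKernel_single_nonneg _ n j) (cos_le_one _)

lemma stayProb_le {m M : ℕ} (hmM : m ≤ M) (n : ℕ) :
    stayProb m n ≤ cos (dirichletAngle M) ^ n / cos (dirichletAngle M * m) := by
  have hsub : symmIcc m ⊆ symmIcc M := Icc_subset_Icc (by omega) (by omega)
  set u := (vecMulOn (symmIcc M) srwKernel)^[n] (Pi.single 0 1)
  have hu := iterate_vecMulOn_srwKernel_single_nonneg (symmIcc M) n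
  rw [le_div_iff₀ (cos_dirichletAngle_mul_pos hmM), ← sum_iterate_mul_cos_dirichletAngle,
    stayProb, sum_mul]
  calc ∑ j ∈ symmIcc m, (vecMulOn (symmIcc m) srwKernel)^[n] (Pi.single 0 1) j *
          cos (dirichletAngle M * m)
      ≤ ∑ j ∈ symmIcc m, u j * cos (dirichletAngle M * j) := by
        refine sum_le_sum fun j hj =>
          mul_le_mul ?_ ?_ (cos_dirichletAngle_mul_pos hmM).le (hu j)
        · exact iterate_vecMulOn_le_of_subset hsub srwKernel_nonneg
            (Pi.single_nonneg.2 zero_le_one) n j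
        · exact cos_dirichletAngle_mul_le (mem_symmIcc.1 hj) hmM
    _ ≤ ∑ j ∈ symmIcc M, u j * cos (dirichletAngle M * j) :=
        sum_le_sum_of_subset_of_nonneg hsub fun j hj _ => mul_nonneg (hu j)
          ((cos_dirichletAngle_mul_pos le_rfl).trans_le
            (cos_dirichletAngle_mul_le (mem_symmIcc.1 hj) le_rfl)).le

lemma log_stayProb_ge {m : ℕ} (hm : 1 ≤ m) (n : ℕ) :
    n * log (cos (dirichletAngle m)) ≤ log (stayProb m n) := by
  rw [← log_pow]
  exact log_le_log (pow_pos (cos_dirichletAngle_pos hm) n)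
    (cos_dirichletAngle_pow_le_stayProb m n)

lemma log_stayProb_le {r s : ℝ} (hr : 1 ≤ r) (hs : 1 < s) (n : ℕ) :
    log (stayProb ⌊r⌋₊ n) ≤
      n * log (cos (dirichletAngle ⌊s * r⌋₊)) - log (cos (π / (2 * s))) := by
  have hm : 1 ≤ ⌊r⌋₊ := Nat.le_floor (by exact_mod_cast hr)
  have hmM : ⌊r⌋₊ ≤ ⌊s * r⌋₊ := Nat.floor_le_floor (le_mul_of_one_le_left (by linarith) hs.le)
  have hc : 0 < cos (π / (2 * s)) := by
    refine cos_pos_of_mem_Ioo ⟨?_, ?_⟩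
    · linarith [pi_pos, div_pos pi_pos (by linarith : (0 : ℝ) < 2 * s)]
    · rw [div_lt_div_iff₀ (by linarith) two_pos]
      nlinarith [pi_pos]
  have hM := cos_dirichletAngle_pos (hm.trans hmM)
  calc log (stayProb ⌊r⌋₊ n)
      ≤ log (cos (dirichletAngle ⌊s * r⌋₊) ^ n / cos (π / (2 * s))) :=
        log_le_log ((pow_pos (cos_dirichletAngle_pos hm) n).trans_le
          (cos_dirichletAngle_pow_le_stayProb _ n)) ((stayProb_le hmM n).trans
          (div_le_div_of_nonneg_left (by positivity) hc
            (cos_pi_div_le_cos_dirichletAngle_mul (by linarith) hs.le)))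
    _ = n * log (cos (dirichletAngle ⌊s * r⌋₊)) - log (cos (π / (2 * s))) := by
        rw [log_div (by positivity) hc.ne', log_pow]

lemma tendsto_sq_mul_log_cos_dirichletAngle {x : ℕ → ℝ} (hx : Tendsto x atTop atTop) {s : ℝ}
    (hs : 0 < s) :
    Tendsto (fun n => x n ^ 2 * log (cos (dirichletAngle ⌊s * x n⌋₊))) atTop
      (𝓝 (-(π ^ 2 / (8 * s ^ 2)))) := by
  have hsx : Tendsto (fun n => s * x n) atTop atTop := hx.const_mul_atTop hs
  have hM : Tendsto (fun n => (⌊s * x n⌋₊ : ℝ) + 1) atTop atTop :=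
    tendsto_atTop_add_const_right _ 1
      (tendsto_natCast_atTop_atTop.comp (tendsto_nat_floor_atTop.comp hsx))
  have hθ : Tendsto (fun n => dirichletAngle ⌊s * x n⌋₊) atTop (𝓝[≠] 0) := by
    refine tendsto_nhdsWithin_iff.2 ⟨?_, .of_forall fun n => (dirichletAngle_pos _).ne'⟩
    have : Tendsto (fun n => π / 2 / ((⌊s * x n⌋₊ : ℝ) + 1)) atTop (𝓝 0) :=
      tendsto_const_nhds.div_atTop hM
    refine this.congr fun n => ?_
    unfold dirichletAngle
    field_simp
  have hxθ : Tendsto (fun n => x n * dirichletAngle ⌊s * x n⌋₊) atTop (𝓝 (π / (2 * s))) := by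
    have := (tendsto_div_natFloor_add_one.comp hsx).const_mul (π / (2 * s))
    rw [mul_one] at this
    refine this.congr fun n => ?_
    simp only [Function.comp, dirichletAngle]
    field_simp
  have hval : -(π ^ 2 / (8 * s ^ 2)) = (π / (2 * s)) ^ 2 * (-1 / 2) := by
    field_simp
    ring
  rw [hval]
  refine ((hxθ.pow 2).mul (tendsto_log_cos_div_sq.comp hθ)).congr fun n => ?_
  have := (dirichletAngle_pos ⌊s * x n⌋₊).ne'
  simp only [Function.comp]
  rw [mul_pow, mul_assoc, mul_div_cancel₀ _ (pow_ne_zero 2 this)]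

lemma eventually_lt_sq_div_mul_log_stayProb {x : ℕ → ℝ} (hx : Tendsto x atTop atTop) {a : ℝ}
    (ha : a < -(π ^ 2 / 8)) : ∀ᶠ n in atTop, a < x n ^ 2 / n * log (stayProb ⌊x n⌋₊ n) := by
  have hlim := tendsto_sq_mul_log_cos_dirichletAngle hx one_pos
  simp only [one_mul, one_pow, mul_one] at hlim
  filter_upwards [hlim.eventually (lt_mem_nhds ha), hx.eventually_ge_atTop 1,
    eventually_gt_atTop 0] with n hlt hxn hn
  refine hlt.trans_le ?_
  calc x n ^ 2 * log (cos (dirichletAngle ⌊x n⌋₊))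
      = x n ^ 2 / n * (n * log (cos (dirichletAngle ⌊x n⌋₊))) := by field_simp
    _ ≤ x n ^ 2 / n * log (stayProb ⌊x n⌋₊ n) := by
        gcongr
        exact log_stayProb_ge (Nat.le_floor (by exact_mod_cast hxn)) n

lemma eventually_sq_div_mul_log_stayProb_lt {x : ℕ → ℝ} (hx : Tendsto x atTop atTop)
    (hx2 : Tendsto (fun n => x n ^ 2 / n) atTop (𝓝 0)) {b : ℝ} (hb : -(π ^ 2 / 8) < b) :
    ∀ᶠ n in atTop, x n ^ 2 / n * log (stayProb ⌊x n⌋₊ n) < b := by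
  obtain ⟨s, hsb, hs⟩ : ∃ s : ℝ, -(π ^ 2 / (8 * s ^ 2)) < b ∧ 1 < s := by
    have hc : ContinuousAt (fun s : ℝ => -(π ^ 2 / (8 * s ^ 2))) 1 := by
      fun_prop (disch := norm_num)
    have : ∀ᶠ s in 𝓝[>] (1 : ℝ), -(π ^ 2 / (8 * s ^ 2)) < b :=
      (hc.tendsto.mono_left nhdsWithin_le_nhds).eventually (gt_mem_nhds (by simpa using hb))
    exact (this.and self_mem_nhdsWithin).exists
  have hlim := (tendsto_sq_mul_log_cos_dirichletAngle hx (by linarith)).sub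
    (hx2.mul_const (log (cos (π / (2 * s)))))
  rw [zero_mul, sub_zero] at hlim
  filter_upwards [hlim.eventually (gt_mem_nhds hsb), hx.eventually_ge_atTop 1,
    eventually_gt_atTop 0] with n hlt hxn hn
  refine lt_of_le_of_lt ?_ hlt
  calc x n ^ 2 / n * log (stayProb ⌊x n⌋₊ n)
      ≤ x n ^ 2 / n *
          (n * log (cos (dirichletAngle ⌊s * x n⌋₊)) - log (cos (π / (2 * s)))) := by
        gcongr
        exact log_stayProb_le hxn hs n
    _ = _ := by field_simp

/-- Mogulskii small deviations: if `x n → ∞` and `x n = o(√n)`, then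
`(x n)²/n · log P(max_{j ≤ n} |X_j| ≤ x n) → -π²/8`. -/
theorem srwZ_small_deviations
    (P : Measure (ℕ → ℤ)) (hP : IsSRWZ P)
    (x : ℕ → ℝ) (hx : Tendsto x atTop atTop)
    (hxo : (fun n : ℕ => x n) =o[atTop] fun n : ℕ => Real.sqrt n) :
    Tendsto
      (fun n : ℕ =>
        x n ^ 2 / n *
          Real.log ((P {ω : ℕ → ℤ | ∀ j ≤ n, |(ω j : ℝ)| ≤ x n}).toReal))
      atTop (nhds (-(π ^ 2 / 8))) := by
  have hx2 := tendsto_sq_div_of_isLittleO_sqrt hxo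
  refine (tendsto_order.2 ⟨fun a ha => eventually_lt_sq_div_mul_log_stayProb hx ha,
    fun b hb => eventually_sq_div_mul_log_stayProb_lt hx hx2 hb⟩).congr' ?_
  filter_upwards [hx.eventually_ge_atTop 0] with n hn
  rw [toReal_measure_forall_abs_le hP hn]
end
end

section
/- Suppose the offspring distribution Z satisfies P(Z = 0) = 0 and E[Z^{1+δ}] < ∞ for some δ > 0. For a vertex v of a tree T define D_T(v) := ∏_{v' < v} deg(v'), the product of the numbers of children over all strict ancestors of v, and set M_T(n) := max{ D_T(v) : |v| = n }. Then there exists α > 0 (any α > E[Z^{1+δ}]^{1/δ} works) such that for GW-almost every tree T there exists N (depending on T) with M_T(n) ≤ α^n for all n ≥ N. -/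
open MeasureTheory ProbabilityTheory Filter Real
open scoped ENNReal NNReal

noncomputable section

/-- `D_T(v) = ∏_{u < v} deg(u)`: the product of the numbers of children over all strict
ancestors of `v` (the strict ancestors of `v` are its proper suffixes `v.drop (j+1)`). -/
def DTprod (T : GWTree) (v : List ℕ) : ℕ :=
  ∏ j ∈ Finset.range v.length, T.deg (v.drop (j + 1))

/-- `M_T(n) = max{D_T(v) : |v| = n}`. -/
def MTn (T : GWTree) (n : ℕ) : ℕ :=
  sSup {m : ℕ | ∃ v, T.mem v ∧ v.length = n ∧ DTprod T v = m}


/-! Give a vertex `v` of generation `n` the weight `D(v)^δ` and let `Y_n` be the total weight of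
generation `n`. Splitting the sum over `v` into the child index chosen below each ancestor, and
using independence of the offspring numbers, `E[Y_n] = E[Z^(1+δ)]^n` (a vertex with `k` children
has `k` children of weight `k^δ` each). For `α^δ > E[Z^(1+δ)]`, Markov's inequality bounds
`P(Y_n ≥ α^(δn))` by a geometric sequence, so by Borel–Cantelli `Y_n < α^(δn)` for all large `n`,
almost surely; since `D(v)^δ ≤ Y_n` whenever `|v| = n`, this gives `M_T(n) ≤ α^n`. -/

namespace GWTree

theorem mem_cons_iff (T : GWTree) (u : List ℕ) (i : ℕ) : T.mem (i :: u) ↔ i < T.deg u := by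
  obtain ⟨d, hd⟩ : ∃ d, {j | T.mem (j :: u)} = Set.Iio d :=
    (show IsLowerSet {j | T.mem (j :: u)} from fun j k hkj hj => T.sibling_mem j k u hj hkj)
      |>.eq_univ_or_Iio.resolve_left fun h => Set.infinite_univ (h ▸ T.fin_children u)
  have hdeg : T.deg u = d := by
    rw [deg, ← Set.ncard_eq_toFinset_card _ (T.fin_children u), hd, ← Finset.coe_Iio,
      Set.ncard_coe_finset, Nat.card_Iio]
  show i ∈ {j | T.mem (j :: u)} ↔ _
  rw [hd, hdeg, Set.mem_Iio]

theorem measurable_mem (v : List ℕ) : Measurable fun T : GWTree => T.mem v :=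
  (measurable_pi_apply v).comp (comap_measurable _)

theorem measurable_deg (u : List ℕ) : Measurable fun T : GWTree => T.deg u := by
  refine measurable_to_countable' fun d => ?_
  have hdeg : ∀ T : GWTree, T.deg u = d ↔ ∀ i, (T.mem (i :: u) ↔ i < d) := fun T => by
    simp_rw [mem_cons_iff]
    exact ⟨fun h i => h ▸ Iff.rfl, eq_of_forall_lt_iff⟩
  simp only [Set.preimage, Set.mem_singleton_iff, hdeg]
  exact measurableSet_setOfPred.2 <|
    Measurable.forall fun i => (measurable_mem _).iff measurable_const

theorem measurable_DTprod (v : List ℕ) : Measurable fun T : GWTree => DTprod T v :=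
  Finset.measurable_prod _ fun _ _ => measurable_deg _

theorem MTn_le_of_forall_DTprod_le (T : GWTree) (n : ℕ) {c : ℝ} (hc : 0 ≤ c)
    (h : ∀ v, T.mem v → v.length = n → (DTprod T v : ℝ) ≤ c) : (MTn T n : ℝ) ≤ c := by
  have hMT : MTn T n ≤ ⌊c⌋₊ := csSup_le' <| by
    rintro _ ⟨v, hv, hvn, rfl⟩
    exact Nat.le_floor (h v hv hvn)
  exact (Nat.cast_le.2 hMT).trans (Nat.floor_le hc)

theorem measurableSet_exists_forall_DTprod_le (c : ℕ → ℝ) :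
    MeasurableSet
      {T : GWTree | ∃ N : ℕ, ∀ v, T.mem v → N ≤ v.length → (DTprod T v : ℝ) ≤ c v.length} :=
  measurableSet_setOfPred.2 <| Measurable.exists fun _ => Measurable.forall fun v =>
    (measurable_mem v).imp <| measurable_const.imp <|
      (measurable_from_nat (f := fun k : ℕ => (k : ℝ) ≤ c v.length)).comp (measurable_DTprod v)

end GWTree

theorem genMem_drop {f : List ℕ → ℕ} : ∀ {v : List ℕ}, genMem f v → ∀ k, genMem f (v.drop k)
  | [], h, _ => by simpa using h
  | _ :: _, h, 0 => h
  | _ :: _, h, k + 1 => genMem_drop h.1 k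

theorem headI_drop_lt_of_genMem {f : List ℕ → ℕ} :
    ∀ {v : List ℕ}, genMem f v → ∀ j < v.length, (v.drop j).headI < f (v.drop (j + 1))
  | _ :: _, h, 0, _ => h.2
  | _ :: _, h, j + 1, hj => headI_drop_lt_of_genMem h.1 j (Nat.lt_of_succ_lt_succ hj)

theorem deg_genTree {f : List ℕ → ℕ} {u : List ℕ} (hu : genMem f u) : (genTree f).deg u = f u :=
  eq_of_forall_lt_iff fun i => by
    rw [← GWTree.mem_cons_iff]
    exact ⟨fun h => h.2, fun h => ⟨hu, h⟩⟩

theorem DTprod_genTree {f : List ℕ → ℕ} {v : List ℕ} (hv : genMem f v) :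
    DTprod (genTree f) v = ∏ j ∈ Finset.range v.length, f (v.drop (j + 1)) :=
  Finset.prod_congr rfl fun j _ => deg_genTree (genMem_drop hv (j + 1))

theorem measurable_genMem : Measurable genMem := by
  refine measurable_pi_lambda _ fun v => ?_
  induction v with
  | nil => exact measurable_const
  | cons i v ih => exact ih.and (measurable_from_nat.comp (measurable_pi_apply v))

theorem measurable_genTree : Measurable genTree := by
  rintro _ ⟨s, hs, rfl⟩
  exact measurable_genMem hs

section Weights

variable (δ : ℝ)

def childWeight (c k : ℕ) : ℝ≥0∞ := if c < k then (k : ℝ≥0∞) ^ δ else 0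

-- `D(v)^δ` if `v` is a vertex of `genTree f` and `0` otherwise, written as a product over the
-- ancestors of `v` so that it factorizes over independent offspring numbers.
def pathWeight (f : List ℕ → ℕ) (v : List ℕ) : ℝ≥0∞ :=
  ∏ j ∈ Finset.range v.length, childWeight δ (v.drop j).headI (f (v.drop (j + 1)))

def levelWeight (f : List ℕ → ℕ) (n : ℕ) : ℝ≥0∞ :=
  ∑' v : List ℕ, if v.length = n then pathWeight δ f v else 0

variable {δ}

theorem tsum_childWeight (hδ : 0 ≤ δ) (k : ℕ) :
    ∑' c, childWeight δ c k = (k : ℝ≥0∞) ^ (1 + δ) := by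
  have hsum : ∑' c, childWeight δ c k = ∑ _c ∈ Finset.range k, (k : ℝ≥0∞) ^ δ := by
    unfold childWeight
    rw [tsum_eq_sum (s := Finset.range k) fun c hc => if_neg (by simpa using hc)]
    exact Finset.sum_congr rfl fun c hc => if_pos (Finset.mem_range.1 hc)
  rw [hsum, Finset.sum_const, Finset.card_range, nsmul_eq_mul,
    ENNReal.rpow_add_of_nonneg _ _ zero_le_one hδ, ENNReal.rpow_one]

theorem pathWeight_genTree (hδ : 0 ≤ δ) {f : List ℕ → ℕ} {v : List ℕ} (hv : genMem f v) :
    pathWeight δ f v = (DTprod (genTree f) v : ℝ≥0∞) ^ δ := by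
  rw [DTprod_genTree hv, Nat.cast_prod, ← ENNReal.prod_rpow_of_nonneg hδ]
  exact Finset.prod_congr rfl fun j hj =>
    if_pos (headI_drop_lt_of_genMem hv j (Finset.mem_range.1 hj))

theorem pathWeight_le_levelWeight (f : List ℕ → ℕ) (v : List ℕ) :
    pathWeight δ f v ≤ levelWeight δ f v.length := by
  simpa [levelWeight] using
    ENNReal.le_tsum (f := fun w => if w.length = v.length then pathWeight δ f w else 0) v

theorem DTprod_genTree_le_of_levelWeight_lt (hδ : 0 < δ) {α : ℝ} (hα : 0 ≤ α)
    {f : List ℕ → ℕ} {v : List ℕ} (hv : genMem f v)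
    (h : levelWeight δ f v.length < (ENNReal.ofReal α ^ δ) ^ v.length) :
    (DTprod (genTree f) v : ℝ) ≤ α ^ v.length := by
  have hlt : (DTprod (genTree f) v : ℝ≥0∞) ^ δ < (ENNReal.ofReal (α ^ v.length)) ^ δ := calc
    _ = pathWeight δ f v := (pathWeight_genTree hδ.le hv).symm
    _ ≤ levelWeight δ f v.length := pathWeight_le_levelWeight f v
    _ < (ENNReal.ofReal α ^ δ) ^ v.length := h
    _ = _ := by rw [← ENNReal.rpow_natCast, ← ENNReal.rpow_mul, mul_comm, ENNReal.rpow_mul,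
      ENNReal.rpow_natCast, ENNReal.ofReal_pow hα]
  rw [ENNReal.rpow_lt_rpow_iff hδ, ← ENNReal.ofReal_natCast] at hlt
  exact ((ENNReal.ofReal_lt_ofReal_iff_of_nonneg (Nat.cast_nonneg _)).1 hlt).le

theorem measurable_pathWeight (v : List ℕ) : Measurable fun f => pathWeight δ f v :=
  Finset.measurable_prod _ fun _ _ =>
    (measurable_from_nat (f := childWeight δ _)).comp (measurable_pi_apply _)

theorem measurable_levelWeight (n : ℕ) : Measurable fun f => levelWeight δ f n :=
  Measurable.tsum fun v => by
    by_cases hv : v.length = n <;> simp only [hv, if_true, if_false]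
    exacts [measurable_pathWeight v, measurable_const]

end Weights

theorem tsum_ite_length_eq_prod_headI (ψ : ℕ → ℝ≥0∞) (n : ℕ) :
    ∑' v : List ℕ, (if v.length = n then ∏ j ∈ Finset.range n, ψ (v.drop j).headI else 0) =
      (∑' c, ψ c) ^ n := by
  induction n with
  | zero =>
    rw [pow_zero, tsum_eq_single [] fun v hv => if_neg (by simpa using hv)]
    simp
  | succ n ih =>
    set G : List ℕ → ℝ≥0∞ := fun v =>
      if v.length = n + 1 then ∏ j ∈ Finset.range (n + 1), ψ (v.drop j).headI else 0
    have hcons : ∀ a w, G (a :: w) =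
        ψ a * if w.length = n then ∏ j ∈ Finset.range n, ψ (w.drop j).headI else 0 := by
      intro a w
      by_cases hw : w.length = n
      · simp [G, hw, Finset.prod_range_succ', mul_comm]
      · simp [G, hw]
    have hsupp : Function.support G ⊆ Set.range fun p : ℕ × List ℕ => p.1 :: p.2 := by
      rintro (_ | ⟨a, w⟩) hv
      · exact absurd (by simp [G]) hv
      · exact ⟨(a, w), rfl⟩
    have hinj : Function.Injective fun p : ℕ × List ℕ => p.1 :: p.2 :=
      fun p q h => Prod.ext (List.cons.inj h).1 (List.cons.inj h).2
    calc ∑' v, G v = ∑' p : ℕ × List ℕ, G (p.1 :: p.2) := (hinj.tsum_eq hsupp).symm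
      _ = ∑' a, ψ a * (∑' c, ψ c) ^ n := by
        simp only [ENNReal.tsum_prod', hcons, ENNReal.tsum_mul_left, ih]
      _ = (∑' c, ψ c) ^ (n + 1) := by rw [ENNReal.tsum_mul_right, pow_succ']

section Independence

variable {Ω : Type*} [MeasurableSpace Ω] {P : Measure Ω} {ξ : List ℕ → Ω → ℕ} {ν : Measure ℕ}

theorem lintegral_pathWeight (hind : iIndepFun ξ P) (hmeas : ∀ v, Measurable (ξ v))
    (hlaw : ∀ v, P.map (ξ v) = ν) (δ : ℝ) (v : List ℕ) :
    ∫⁻ ω, pathWeight δ (fun u => ξ u ω) v ∂P =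
      ∏ j ∈ Finset.range v.length, ∫⁻ k, childWeight δ (v.drop j).headI k ∂ν := by
  have hinj : Function.Injective fun j : Fin v.length => v.drop (j + 1) := fun i j h => by
    have := congrArg List.length h
    simp only [List.length_drop] at this
    omega
  have hindep : iIndepFun (fun (j : Fin v.length) ω =>
      childWeight δ (v.drop j).headI (ξ (v.drop (j + 1)) ω)) P :=
    (hind.precomp hinj).comp (fun j => childWeight δ (v.drop j).headI)
      fun _ => measurable_from_nat
  simp only [pathWeight, Finset.prod_range]
  rw [lintegral_prod_eq_prod_lintegral_of_indepFun _ _ hindep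
    fun _ => (measurable_from_nat (f := childWeight δ _)).comp (hmeas _)]
  refine Finset.prod_congr rfl fun j _ => ?_
  rw [← hlaw (v.drop (j + 1)), lintegral_map measurable_from_nat (hmeas _)]

theorem lintegral_levelWeight (hind : iIndepFun ξ P) (hmeas : ∀ v, Measurable (ξ v))
    (hlaw : ∀ v, P.map (ξ v) = ν) {δ : ℝ} (hδ : 0 ≤ δ) (n : ℕ) :
    ∫⁻ ω, levelWeight δ (fun u => ξ u ω) n ∂P = (∫⁻ k, (k : ℝ≥0∞) ^ (1 + δ) ∂ν) ^ n := calc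
  _ = ∑' v : List ℕ, if v.length = n
        then ∏ j ∈ Finset.range n, ∫⁻ k, childWeight δ (v.drop j).headI k ∂ν else 0 := by
    simp only [levelWeight]
    rw [lintegral_tsum fun v => ?_]
    · refine tsum_congr fun v => ?_
      split_ifs with hv
      · rw [lintegral_pathWeight hind hmeas hlaw, hv]
      · exact lintegral_zero
    · by_cases hv : v.length = n <;> simp only [hv, if_true, if_false]
      exacts [((measurable_pathWeight v).comp (measurable_pi_lambda _ hmeas)).aemeasurable,
        aemeasurable_const]
  _ = (∑' c, ∫⁻ k, childWeight δ c k ∂ν) ^ n :=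
    tsum_ite_length_eq_prod_headI (fun c => ∫⁻ k, childWeight δ c k ∂ν) n
  _ = _ := by
    rw [← lintegral_tsum fun c => measurable_from_nat.aemeasurable]
    simp only [tsum_childWeight hδ]

end Independence

theorem ae_eventually_lt_pow_of_lintegral_le_pow {Ω : Type*} [MeasurableSpace Ω] {P : Measure Ω}
    {Y : ℕ → Ω → ℝ≥0∞} (hY : ∀ n, AEMeasurable (Y n) P) {m t : ℝ≥0∞}
    (hint : ∀ n, ∫⁻ ω, Y n ω ∂P ≤ m ^ n) (hmt : m < t) (ht : t ≠ ∞) :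
    ∀ᵐ ω ∂P, ∀ᶠ n in atTop, Y n ω < t ^ n := by
  have ht0 : t ≠ 0 := (hmt.trans_le' bot_le).ne'
  have hratio : m / t < 1 := (ENNReal.div_lt_iff (.inl ht0) (.inl ht)).2 (by rwa [one_mul])
  have hmarkov : ∀ n, P {ω | t ^ n ≤ Y n ω} ≤ (m / t) ^ n := fun n => calc
    _ ≤ (∫⁻ ω, Y n ω ∂P) / t ^ n :=
      meas_ge_le_lintegral_div (hY n) (pow_ne_zero n ht0) (ENNReal.pow_ne_top ht)
    _ ≤ m ^ n / t ^ n := by gcongr; exact hint n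
    _ = (m / t) ^ n := by rw [div_eq_mul_inv, div_eq_mul_inv, ENNReal.inv_pow, mul_pow]
  have hsum : ∑' n, P {ω | t ^ n ≤ Y n ω} ≠ ∞ :=
    ne_top_of_le_ne_top (tsum_geometric_lt_top.2 hratio).ne (ENNReal.tsum_le_tsum hmarkov)
  filter_upwards [ae_eventually_notMem hsum] with ω hω
  exact hω.mono fun n hn => not_le.1 hn

theorem ENNReal.lt_ofReal_rpow_of_toReal_rpow_one_div_lt {x : ℝ≥0∞} (hx : x ≠ ∞) {δ α : ℝ}
    (hδ : 0 < δ) (h : x.toReal ^ (1 / δ) < α) : x < ENNReal.ofReal α ^ δ := by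
  have hα : 0 < α := (Real.rpow_nonneg ENNReal.toReal_nonneg _).trans_lt h
  rw [one_div, Real.rpow_inv_lt_iff_of_pos ENNReal.toReal_nonneg hα.le hδ] at h
  rwa [ENNReal.ofReal_rpow_of_pos hα, ← ENNReal.ofReal_toReal hx,
    ENNReal.ofReal_lt_ofReal_iff (by positivity)]

theorem max_weight_exponential_bound_general
    (ν : Measure ℕ)
    (δ : ℝ) (hδ : 0 < δ) (hmom : ∫⁻ k, (k : ℝ≥0∞) ^ ((1 : ℝ) + δ) ∂ν < ⊤)
    (GW : Measure GWTree) (hGW : IsGW ν GW) :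
    ∀ α : ℝ, (∫⁻ k, (k : ℝ≥0∞) ^ ((1 : ℝ) + δ) ∂ν).toReal ^ ((1 : ℝ) / δ) < α →
      ∀ᵐ T ∂GW, ∃ N : ℕ, ∀ n, N ≤ n → (MTn T n : ℝ) ≤ α ^ n := by
  intro α hα
  obtain ⟨Ω, _, P, _, ξ, hind, hmeas, hlaw, rfl⟩ := hGW
  have hα0 : 0 ≤ α := (Real.rpow_nonneg ENNReal.toReal_nonneg _).trans hα.le
  have hξ : Measurable fun ω u => ξ u ω := measurable_pi_lambda _ hmeas
  have htree : Measurable fun ω => genTree fun u => ξ u ω := measurable_genTree.comp hξ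
  have hsmall : ∀ᵐ ω ∂P, ∀ᶠ n in atTop,
      levelWeight δ (fun u => ξ u ω) n < (ENNReal.ofReal α ^ δ) ^ n :=
    ae_eventually_lt_pow_of_lintegral_le_pow
      (fun n => ((measurable_levelWeight n).comp hξ).aemeasurable)
      (fun n => (lintegral_levelWeight hind hmeas hlaw hδ.le n).le)
      (ENNReal.lt_ofReal_rpow_of_toReal_rpow_one_div_lt hmom.ne hδ hα)
      (by finiteness)
  have hbounded : ∀ᵐ T ∂P.map fun ω => genTree fun u => ξ u ω,
      ∃ N : ℕ, ∀ v, T.mem v → N ≤ v.length → (DTprod T v : ℝ) ≤ α ^ v.length := by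
    rw [ae_map_iff htree.aemeasurable (GWTree.measurableSet_exists_forall_DTprod_le _)]
    filter_upwards [hsmall] with ω hω
    obtain ⟨N, hN⟩ := eventually_atTop.1 hω
    exact ⟨N, fun v hv hNv => DTprod_genTree_le_of_levelWeight_lt hδ hα0 hv (hN _ hNv)⟩
  filter_upwards [hbounded] with T ⟨N, hN⟩
  exact ⟨N, fun n hn => T.MTn_le_of_forall_DTprod_le n (by positivity)
    fun v hv hvn => hvn ▸ hN v hv (hvn ▸ hn)⟩

/-- if `P(Z = 0) = 0` and `E[Z^(1+δ)] < ∞`, then for every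
`α > E[Z^(1+δ)]^(1/δ)` (in particular such an `α > 0` exists), for `GW`-a.e. `T` there
is `N` with `M_T(n) ≤ α^n` for all `n ≥ N`. -/
theorem max_weight_exponential_bound
    (ν : Measure ℕ) [IsProbabilityMeasure ν]
    (hz0 : ν {0} = 0)
    (δ : ℝ) (hδ : 0 < δ) (hmom : ∫⁻ k, (k : ℝ≥0∞) ^ ((1 : ℝ) + δ) ∂ν < ⊤)
    (GW : Measure GWTree) (hGW : IsGW ν GW) :
    ∀ α : ℝ, (∫⁻ k, (k : ℝ≥0∞) ^ ((1 : ℝ) + δ) ∂ν).toReal ^ ((1 : ℝ) / δ) < α →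
      ∀ᵐ T ∂GW, ∃ N : ℕ, ∀ n, N ≤ n → (MTn T n : ℝ) ≤ α ^ n :=
  max_weight_exponential_bound_general ν δ hδ hmom GW hGW
end
end

section
/- Fix an integer m ≥ 2 and let M := 4m/(m+1)². There exist constants c_1, c_2 ∈ (0,1), depending only on m, with the following property. Let T be any infinite rooted tree in which every vertex has at least m children, let BRW_T be the biased random walk on T defined by: from the root, step to each child with probability 1/deg(0); from a non-root vertex v with parent u, step to u with probability m/(deg(v)+m) and to each child of v with probability 1/(deg(v)+m). Define B_n := #{ j < 2n : X_j = 0 or deg(X_j) > m }. Then for every event A in the path space of T that depends only on the first 2n steps and such that every path in A starts at the root and satisfies X_{2n} = 0: M^n · E_{BRW_T}[ c_1^{B_n} · 1_A ] ≤ SRW_T(A) ≤ M^n · E_{BRW_T}[ c_2^{B_n} · 1_A ]. -/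
open MeasureTheory ProbabilityTheory Filter Real
open scoped ENNReal NNReal

noncomputable section

/-- Transition probabilities of the `m`-biased random walk on `T`: from the root, step
to each child with probability `1/deg(0)`; from a non-root vertex `v`, step to the
parent with probability `m/(deg(v)+m)` and to each child with probability
`1/(deg(v)+m)`. -/
def bstep (T : GWTree) (m : ℕ) (u v : List ℕ) : ℝ≥0∞ := by
  classical
  exact
    if u = [] then (if ∃ i, v = i :: u ∧ T.mem v then ((T.deg u : ℝ≥0∞))⁻¹ else 0)
    else if v = u.tail then (m : ℝ≥0∞) / ((T.deg u : ℝ≥0∞) + m)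
    else if ∃ i, v = i :: u ∧ T.mem v then ((T.deg u : ℝ≥0∞) + m)⁻¹ else 0

/-- `Q` is the law of the `m`-biased random walk on `T` started at the root. -/
def IsBRW (T : GWTree) (m : ℕ) (Q : Measure (ℕ → List ℕ)) : Prop :=
  IsProbabilityMeasure Q ∧
  ∀ (x : ℕ → List ℕ) (n : ℕ),
    Q {ω | ∀ j ≤ n, ω j = x j} =
      (if x 0 = ([] : List ℕ) then 1 else 0) *
        ∏ j ∈ Finset.range n, bstep T m (x j) (x (j + 1))

/-- `B_n = #{j < 2n : X_j = 0 or deg(X_j) > m}`. -/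
def Bcount (T : GWTree) (m n : ℕ) (ω : ℕ → List ℕ) : ℕ :=
  Set.ncard {j : ℕ | j < 2 * n ∧ (ω j = ([] : List ℕ) ∨ m < T.deg (ω j))}

/-!
Both walks are Markov chains, so on the cylinder of a path with `x₀ = x_{2n} = []` each measure
is a product of one-step transition probabilities and the comparison can be made step by step.
A loop of length `2n` makes exactly `n` steps away from the root and `n` towards it, so weighting
the former by `2m/(m+1)` and the latter by `2/(m+1)` multiplies the BRW probability of the path
by exactly `Mⁿ`. After this reweighting a BRW step from a non-root vertex with `d` children has
weight `2m/((m+1)(d+m))` in either direction; for `d = m` this is the SRW probability `1/(d+1)`,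
and for `d > m`, as for steps from the root, the SRW probability lies between `c₁` and `c₂` times
the weight. Multiplying along the path gives the factors `c^{B_n}`, and `A` is a countable
disjoint union of such cylinders.
-/

/-- `c₁` makes the comparison exact at the root. -/
def lowerConst (m : ℝ) : ℝ := (m + 1) / (2 * m)

/-- `c₂` makes the comparison exact at vertices with `m + 1` children, the worst case. -/
def upperConst (m : ℝ) : ℝ := (2 * m + 1) * (m + 1) / (2 * m * (m + 2))

section Constants

variable {m : ℝ}

lemma lowerConst_mem_Ioo (hm : 1 < m) : lowerConst m ∈ Set.Ioo 0 1 := by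
  unfold lowerConst
  constructor
  · positivity
  · rw [div_lt_one (by positivity)]
    linarith

lemma upperConst_mem_Ioo (hm : 1 < m) : upperConst m ∈ Set.Ioo 0 1 := by
  unfold upperConst
  constructor
  · positivity
  · rw [div_lt_one (by positivity)]
    nlinarith

lemma lowerConst_nonneg (hm : 0 ≤ m) : 0 ≤ lowerConst m := by
  unfold lowerConst
  positivity

lemma upperConst_nonneg (hm : 0 ≤ m) : 0 ≤ upperConst m := by
  unfold upperConst
  positivity

lemma mul_lowerConst (hm : 0 < m) : 2 * m / (m + 1) * lowerConst m = 1 := by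
  unfold lowerConst
  field_simp

lemma one_le_mul_upperConst (hm : 1 ≤ m) : 1 ≤ 2 * m / (m + 1) * upperConst m := by
  unfold upperConst
  rw [div_mul_div_comm, one_le_div (by positivity)]
  nlinarith [mul_nonneg (by positivity : (0 : ℝ) ≤ 2 * m * (m + 1)) (sub_nonneg.2 hm)]

lemma lowerConst_mul_le (hm : 1 ≤ m) {d : ℝ} (hd : m ≤ d) :
    lowerConst m * (2 * m / ((m + 1) * (d + m))) ≤ 1 / (d + 1) := by
  have hlow : lowerConst m * (2 * m / ((m + 1) * (d + m))) = 1 / (d + m) := by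
    unfold lowerConst
    field_simp
  rw [hlow]
  gcongr
  linarith

lemma le_upperConst_mul (hm : 1 ≤ m) {d : ℝ} (hd : m + 1 ≤ d) :
    1 / (d + 1) ≤ upperConst m * (2 * m / ((m + 1) * (d + m))) := by
  have hup : upperConst m * (2 * m / ((m + 1) * (d + m))) =
      (2 * m + 1) / ((m + 2) * (d + m)) := by
    unfold upperConst
    field_simp
  rw [hup, div_le_div_iff₀ (by linarith) (by nlinarith)]
  nlinarith [mul_nonneg (sub_nonneg.2 hm) (sub_nonneg.2 hd)]

lemma two_mul_div_mul_add_self (hm : 0 < m) : 2 * m / ((m + 1) * (m + m)) = 1 / (m + 1) := by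
  field_simp
  ring

end Constants

lemma List.tail_ne_cons {α : Type*} (u : List α) (i : α) : u.tail ≠ i :: u := by
  intro h
  have := congrArg List.length h
  simp only [List.length_tail, List.length_cons] at this
  omega

namespace GWTree

def Adj (T : GWTree) (u v : List ℕ) : Prop := (u ≠ [] ∧ v = u.tail) ∨ ∃ i, v = i :: u ∧ T.mem v

variable {T : GWTree} {u v : List ℕ}

lemma Adj.mem (h : T.Adj u v) (hu : T.mem u) : T.mem v := by
  rcases h with ⟨hne, rfl⟩ | ⟨i, rfl, hv⟩
  · obtain ⟨a, t, rfl⟩ := List.exists_cons_of_ne_nil hne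
    exact T.parent_mem a t hu
  · exact hv

lemma adj_of_step_ne_zero (h : T.step u v ≠ 0) : T.Adj u v := by
  by_contra hc
  unfold Adj at hc
  exact h (by rw [step, if_neg hc])

lemma step_of_adj_of_ne_nil (h : T.Adj u v) (hu : u ≠ []) :
    T.step u v = ENNReal.ofReal (1 / (T.deg u + 1)) := by
  unfold Adj at h
  rw [step, if_pos h, if_neg hu, one_div, ENNReal.ofReal_inv_of_pos (by positivity),
    ← Nat.cast_add_one, ENNReal.ofReal_natCast]

end GWTree

open GWTree

section BiasedStep

variable {T : GWTree} {m : ℕ} {u v : List ℕ}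

lemma step_nil_eq_bstep : T.step [] v = bstep T m [] v := by
  unfold step bstep
  split_ifs <;> simp_all

lemma bstep_eq_zero_of_not_adj (h : ¬T.Adj u v) : bstep T m u v = 0 := by
  simp only [Adj, not_or, not_and, not_exists] at h
  unfold bstep
  split_ifs <;> grind

open Classical in
def stepFactor (m : ℕ) (u v : List ℕ) : ℝ :=
  if ∃ i, v = i :: u then 2 * m / (m + 1) else 2 / (m + 1)

lemma ofReal_stepFactor_mul_bstep (hm : 0 < m) (h : T.Adj u v) (hu : u ≠ []) :
    ENNReal.ofReal (stepFactor m u v) * bstep T m u v =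
      ENNReal.ofReal (2 * m / ((m + 1) * (T.deg u + m))) := by
  have hpos : (0 : ℝ) < T.deg u + m := by positivity
  rcases h with ⟨-, rfl⟩ | ⟨i, rfl, hv⟩
  · have hb : bstep T m u u.tail = ENNReal.ofReal (m / (T.deg u + m)) := by
      rw [bstep, if_neg hu, if_pos rfl, ENNReal.ofReal_div_of_pos hpos,
        ENNReal.ofReal_add (by positivity) (by positivity)]
      simp only [ENNReal.ofReal_natCast]
    rw [stepFactor, if_neg (fun ⟨i, h⟩ => u.tail_ne_cons i h), hb,
      ← ENNReal.ofReal_mul (by positivity)]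
    congr 1
    field_simp
  · have hb : bstep T m u (i :: u) = ENNReal.ofReal (1 / (T.deg u + m)) := by
      rw [bstep, if_neg hu, if_neg (u.tail_ne_cons i).symm, if_pos ⟨i, rfl, hv⟩, one_div,
        ENNReal.ofReal_inv_of_pos hpos, ENNReal.ofReal_add (by positivity) (by positivity)]
      simp only [ENNReal.ofReal_natCast]
    rw [stepFactor, if_pos ⟨i, rfl⟩, hb, ← ENNReal.ofReal_mul (by positivity)]
    congr 1
    field_simp

end BiasedStep

section StepComparison

variable {T : GWTree} {m : ℕ} {u v : List ℕ}

open Classical in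
def visitWeight (c : ℝ) (T : GWTree) (m : ℕ) (u : List ℕ) : ℝ :=
  if u = [] ∨ m < T.deg u then c else 1

lemma visitWeight_nonneg {c : ℝ} (hc : 0 ≤ c) : 0 ≤ visitWeight c T m u := by
  unfold visitWeight
  split_ifs <;> positivity

lemma step_bounds (hm : 0 < m) (h : T.Adj u v) (hd : m ≤ T.deg u) :
    ENNReal.ofReal (stepFactor m u v * visitWeight (lowerConst m) T m u) * bstep T m u v ≤
        T.step u v ∧
      T.step u v ≤
        ENNReal.ofReal (stepFactor m u v * visitWeight (upperConst m) T m u) * bstep T m u v := by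
  have hm' : (1 : ℝ) ≤ m := by exact_mod_cast hm
  by_cases hu : u = []
  · subst hu
    obtain ⟨i, rfl, -⟩ := h.resolve_left fun h' => h'.1 rfl
    have hsf : stepFactor m [] [i] = 2 * m / (m + 1) := if_pos ⟨i, rfl⟩
    have hvw (c : ℝ) : visitWeight c T m [] = c := if_pos (Or.inl rfl)
    rw [hsf, hvw, hvw, ← step_nil_eq_bstep, mul_lowerConst (by linarith), ENNReal.ofReal_one,
      one_mul]
    exact ⟨le_rfl, le_mul_of_one_le_left zero_le
      (ENNReal.one_le_ofReal.2 (one_le_mul_upperConst hm'))⟩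
  · have hd' : (m : ℝ) ≤ T.deg u := by exact_mod_cast hd
    have hweighted {c : ℝ} (hc : 0 ≤ c) :
        ENNReal.ofReal (stepFactor m u v * visitWeight c T m u) * bstep T m u v =
          ENNReal.ofReal (visitWeight c T m u * (2 * m / ((m + 1) * (T.deg u + m)))) := by
      have hvw : 0 ≤ visitWeight c T m u := visitWeight_nonneg hc
      rw [mul_comm (stepFactor m u v), ENNReal.ofReal_mul hvw, mul_assoc,
        ofReal_stepFactor_mul_bstep hm h hu, ← ENNReal.ofReal_mul hvw]
    rw [hweighted (lowerConst_nonneg m.cast_nonneg), hweighted (upperConst_nonneg m.cast_nonneg),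
      step_of_adj_of_ne_nil h hu]
    simp only [visitWeight, hu, false_or]
    split_ifs with hbig
    · have hbig' : (m : ℝ) + 1 ≤ T.deg u := by exact_mod_cast hbig
      exact ⟨ENNReal.ofReal_le_ofReal (lowerConst_mul_le hm' hd'),
        ENNReal.ofReal_le_ofReal (le_upperConst_mul hm' hbig')⟩
    · rw [show T.deg u = m by omega, one_mul, two_mul_div_mul_add_self (by linarith)]
      exact ⟨le_rfl, le_rfl⟩

end StepComparison

section Loops

open Finset

variable {x : ℕ → List ℕ}

open Classical in
lemma two_mul_card_up_steps (k : ℕ)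
    (hstep : ∀ j < k, (x j ≠ [] ∧ x (j + 1) = (x j).tail) ∨ ∃ i, x (j + 1) = i :: x j) :
    2 * #{j ∈ range k | ∃ i, x (j + 1) = i :: x j} + (x 0).length = k + (x k).length := by
  induction k with
  | zero => simp
  | succ k ih =>
    have ih := ih fun j hj => hstep j (by omega)
    rw [range_add_one, filter_insert]
    rcases hstep k (by omega) with ⟨hne, hk⟩ | ⟨i, hk⟩
    · have hdown : ¬∃ i, x (k + 1) = i :: x k := fun ⟨i, hi⟩ => (x k).tail_ne_cons i (hk ▸ hi)
      have hpos := List.length_pos_iff.2 hne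
      rw [if_neg hdown, hk, List.length_tail]
      omega
    · rw [if_pos ⟨i, hk⟩, card_insert_of_notMem (by simp), hk, List.length_cons]
      omega

variable {n : ℕ}

open Classical in
lemma card_up_steps_of_loop
    (hstep : ∀ j < 2 * n, (x j ≠ [] ∧ x (j + 1) = (x j).tail) ∨ ∃ i, x (j + 1) = i :: x j)
    (h0 : x 0 = []) (h2 : x (2 * n) = []) :
    #{j ∈ range (2 * n) | ∃ i, x (j + 1) = i :: x j} = n := by
  have h := two_mul_card_up_steps (2 * n) hstep
  rw [h0, h2, List.length_nil] at h
  omega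

lemma prod_stepFactor_of_loop (m : ℕ)
    (hstep : ∀ j < 2 * n, (x j ≠ [] ∧ x (j + 1) = (x j).tail) ∨ ∃ i, x (j + 1) = i :: x j)
    (h0 : x 0 = []) (h2 : x (2 * n) = []) :
    ∏ j ∈ range (2 * n), stepFactor m (x j) (x (j + 1)) = (4 * m / ((m : ℝ) + 1) ^ 2) ^ n := by
  classical
  have hup := card_up_steps_of_loop hstep h0 h2
  have hdown : #{j ∈ range (2 * n) | ¬∃ i, x (j + 1) = i :: x j} = n := by
    have h := card_filter_add_card_filter_not (s := range (2 * n))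
      fun j => ∃ i, x (j + 1) = i :: x j
    rw [card_range] at h
    omega
  simp only [stepFactor]
  rw [prod_ite, prod_const, prod_const, hup, hdown, ← mul_pow]
  congr 1
  field_simp
  ring

lemma Bcount_eq_card (T : GWTree) (m n : ℕ) (x : ℕ → List ℕ) :
    Bcount T m n x = #{j ∈ range (2 * n) | x j = [] ∨ m < T.deg (x j)} := by
  rw [Bcount, ← Set.ncard_coe_finset]
  congr 1
  ext j
  simp

lemma Bcount_congr {T : GWTree} {m : ℕ} {ω ω' : ℕ → List ℕ} (h : ∀ j < 2 * n, ω j = ω' j) :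
    Bcount T m n ω = Bcount T m n ω' := by
  rw [Bcount_eq_card, Bcount_eq_card, filter_congr fun j hj => by rw [h j (mem_range.1 hj)]]

lemma prod_visitWeight (c : ℝ) (T : GWTree) (m : ℕ) :
    ∏ j ∈ range (2 * n), visitWeight c T m (x j) = c ^ Bcount T m n x := by
  simp only [visitWeight]
  rw [prod_ite, prod_const, prod_const_one, mul_one, Bcount_eq_card]

lemma stepFactor_nonneg (m : ℕ) (u v : List ℕ) : 0 ≤ stepFactor m u v := by
  unfold stepFactor
  split_ifs <;> positivity

lemma loop_prob_bounds {T : GWTree} {m : ℕ} (hm : 0 < m) (hdeg : ∀ v, T.mem v → m ≤ T.deg v)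
    (h0 : x 0 = []) (h2 : x (2 * n) = []) :
    ENNReal.ofReal (4 * m / ((m : ℝ) + 1) ^ 2) ^ n *
        (ENNReal.ofReal (lowerConst m ^ Bcount T m n x) *
          ∏ j ∈ range (2 * n), bstep T m (x j) (x (j + 1))) ≤
        ∏ j ∈ range (2 * n), T.step (x j) (x (j + 1)) ∧
      ∏ j ∈ range (2 * n), T.step (x j) (x (j + 1)) ≤
        ENNReal.ofReal (4 * m / ((m : ℝ) + 1) ^ 2) ^ n *
          (ENNReal.ofReal (upperConst m ^ Bcount T m n x) *
            ∏ j ∈ range (2 * n), bstep T m (x j) (x (j + 1))) := by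
  by_cases hadj : ∀ j < 2 * n, T.Adj (x j) (x (j + 1))
  · have hmem : ∀ j ≤ 2 * n, T.mem (x j) := by
      intro j hj
      induction j with
      | zero => exact h0 ▸ T.root_mem
      | succ j ih => exact (hadj j (by omega)).mem (ih (by omega))
    have hstep j (hj : j < 2 * n) :
        (x j ≠ [] ∧ x (j + 1) = (x j).tail) ∨ ∃ i, x (j + 1) = i :: x j :=
      Or.imp id (fun ⟨i, hi, _⟩ => ⟨i, hi⟩) (hadj j hj)
    have hweighted {c : ℝ} (hc : 0 ≤ c) :
        ENNReal.ofReal (4 * m / ((m : ℝ) + 1) ^ 2) ^ n *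
            (ENNReal.ofReal (c ^ Bcount T m n x) *
              ∏ j ∈ range (2 * n), bstep T m (x j) (x (j + 1))) =
          ∏ j ∈ range (2 * n), ENNReal.ofReal
            (stepFactor m (x j) (x (j + 1)) * visitWeight c T m (x j)) *
              bstep T m (x j) (x (j + 1)) := by
      rw [prod_mul_distrib, ← ENNReal.ofReal_prod_of_nonneg fun j _ =>
          mul_nonneg (stepFactor_nonneg m _ _) (visitWeight_nonneg hc),
        prod_mul_distrib, prod_stepFactor_of_loop m hstep h0 h2, prod_visitWeight,
        ENNReal.ofReal_mul (by positivity), ← ENNReal.ofReal_pow (by positivity), mul_assoc]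
    rw [hweighted (lowerConst_nonneg m.cast_nonneg), hweighted (upperConst_nonneg m.cast_nonneg)]
    have hbounds j (hj : j ∈ range (2 * n)) := step_bounds hm (hadj j (mem_range.1 hj))
      (hdeg _ (hmem j (mem_range.1 hj).le))
    exact ⟨prod_le_prod' fun j hj => (hbounds j hj).1, prod_le_prod' fun j hj => (hbounds j hj).2⟩
  · push Not at hadj
    obtain ⟨j, hj, hnot⟩ := hadj
    have hs : ∏ j ∈ range (2 * n), T.step (x j) (x (j + 1)) = 0 :=
      prod_eq_zero (mem_range.2 hj) (not_not.1 fun h => hnot (adj_of_step_ne_zero h))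
    have hb : ∏ j ∈ range (2 * n), bstep T m (x j) (x (j + 1)) = 0 :=
      prod_eq_zero (mem_range.2 hj) (bstep_eq_zero_of_not_adj hnot)
    simp [hs, hb]

end Loops

section PathCylinders

variable {α : Type*}

def extendPath {N : ℕ} (p : Fin (N + 1) → α) : ℕ → α := fun j => p (Fin.clamp j N)

def pathCylinder (N : ℕ) (x : ℕ → α) : Set (ℕ → α) := {ω | ∀ j ≤ N, ω j = x j}

lemma extendPath_apply {N : ℕ} (p : Fin (N + 1) → α) (i : Fin (N + 1)) : extendPath p i = p i := by
  simp [extendPath, Fin.clamp, Nat.min_eq_left (Nat.le_of_lt_succ i.2)]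

lemma mem_pathCylinder_extendPath (N : ℕ) (ω : ℕ → α) :
    ω ∈ pathCylinder N (extendPath fun i : Fin (N + 1) => ω i) := fun j hj =>
  (extendPath_apply (fun i : Fin (N + 1) => ω i) ⟨j, Nat.lt_succ_of_le hj⟩).symm

lemma pairwise_disjoint_pathCylinder (N : ℕ) :
    Pairwise (Function.onFun Disjoint
      fun p : Fin (N + 1) → α => pathCylinder N (extendPath p)) := by
  refine fun p q hpq => Set.disjoint_left.2 fun ω hp hq => hpq (funext fun i => ?_)
  rw [← extendPath_apply p, ← extendPath_apply q, ← hp i (Nat.le_of_lt_succ i.2),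
    ← hq i (Nat.le_of_lt_succ i.2)]

variable [MeasurableSpace α] [MeasurableSingletonClass α]

lemma measurableSet_pathCylinder (N : ℕ) (x : ℕ → α) : MeasurableSet (pathCylinder N x) := by
  have h : pathCylinder N x = ⋂ j ∈ Set.Iic N, (fun ω => ω j) ⁻¹' {x j} := by
    ext
    simp [pathCylinder]
  rw [h]
  exact MeasurableSet.biInter (Set.to_countable _) fun j _ =>
    measurable_pi_apply j (measurableSet_singleton _)

variable [Countable α] (μ : Measure (ℕ → α)) {N : ℕ} {A : Set (ℕ → α)}

lemma setLIntegral_eq_tsum_pathCylinder (hA : ∀ ω ω', (∀ j ≤ N, ω j = ω' j) → (ω ∈ A ↔ ω' ∈ A))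
    {f : (ℕ → α) → ℝ≥0∞}
    (hf : ∀ ω ω', (∀ j ≤ N, ω j = ω' j) → f ω = f ω') :
    ∫⁻ ω in A, f ω ∂μ = ∑' p : {p : Fin (N + 1) → α // extendPath p ∈ A},
      f (extendPath p.1) * μ (pathCylinder N (extendPath p.1)) := by
  have hunion : A = ⋃ p : {p : Fin (N + 1) → α // extendPath p ∈ A},
      pathCylinder N (extendPath p.1) := by
    ext ω
    refine ⟨fun hω => Set.mem_iUnion.2 ⟨⟨_, (hA _ _ (mem_pathCylinder_extendPath N ω)).1 hω⟩,
      mem_pathCylinder_extendPath N ω⟩, fun hω => ?_⟩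
    obtain ⟨p, hp⟩ := Set.mem_iUnion.1 hω
    exact (hA _ _ hp).2 p.2
  conv_lhs => rw [hunion]
  rw [lintegral_iUnion (fun p => measurableSet_pathCylinder N _)
    ((pairwise_disjoint_pathCylinder N).comp_of_injective Subtype.val_injective)]
  refine tsum_congr fun p => ?_
  rw [setLIntegral_congr_fun (measurableSet_pathCylinder N _) fun ω hω => hf ω _ hω,
    setLIntegral_const]

lemma measure_eq_tsum_pathCylinder (hA : ∀ ω ω', (∀ j ≤ N, ω j = ω' j) → (ω ∈ A ↔ ω' ∈ A)) :
    μ A = ∑' p : {p : Fin (N + 1) → α // extendPath p ∈ A},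
      μ (pathCylinder N (extendPath p.1)) := by
  rw [← setLIntegral_one, setLIntegral_eq_tsum_pathCylinder μ hA fun _ _ _ => rfl]
  simp only [one_mul]

end PathCylinders

lemma IsSRW.measure_pathCylinder {T : GWTree} {P : Measure (ℕ → List ℕ)} (hP : IsSRW T P)
    {x : ℕ → List ℕ} (h0 : x 0 = []) (N : ℕ) :
    P (pathCylinder N x) = ∏ j ∈ Finset.range N, T.step (x j) (x (j + 1)) := by
  rw [pathCylinder, hP.2, if_pos h0, one_mul]

lemma IsBRW.measure_pathCylinder {T : GWTree} {m : ℕ} {Q : Measure (ℕ → List ℕ)}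
    (hQ : IsBRW T m Q) {x : ℕ → List ℕ} (h0 : x 0 = []) (N : ℕ) :
    Q (pathCylinder N x) = ∏ j ∈ Finset.range N, bstep T m (x j) (x (j + 1)) := by
  rw [pathCylinder, hQ.2, if_pos h0, one_mul]

/-- comparison between the simple and the biased random walk on trees of
minimal degree `m`: `Mⁿ E_BRW[c₁^{B_n} 1_A] ≤ SRW(A) ≤ Mⁿ E_BRW[c₂^{B_n} 1_A]` with
`M = 4m/(m+1)²`, for constants `c₁, c₂ ∈ (0,1)` depending only on `m`. -/
theorem srw_brw_comparison (m : ℕ) (hm : 2 ≤ m) :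
    ∃ c₁ c₂ : ℝ, c₁ ∈ Set.Ioo (0 : ℝ) 1 ∧ c₂ ∈ Set.Ioo (0 : ℝ) 1 ∧
      ∀ T : GWTree, survives T → (∀ v, T.mem v → m ≤ T.deg v) →
        ∀ (n : ℕ) (A : Set (ℕ → List ℕ)),
          (∀ ω ω' : ℕ → List ℕ, (∀ j, j ≤ 2 * n → ω j = ω' j) → (ω ∈ A ↔ ω' ∈ A)) →
          (∀ ω ∈ A, ω 0 = ([] : List ℕ) ∧ ω (2 * n) = ([] : List ℕ)) →
          ∀ P Q : Measure (ℕ → List ℕ), IsSRW T P → IsBRW T m Q →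
            ENNReal.ofReal (4 * (m : ℝ) / ((m : ℝ) + 1) ^ 2) ^ n *
                ∫⁻ ω in A, ENNReal.ofReal (c₁ ^ Bcount T m n ω) ∂Q ≤ P A ∧
            P A ≤ ENNReal.ofReal (4 * (m : ℝ) / ((m : ℝ) + 1) ^ 2) ^ n *
                ∫⁻ ω in A, ENNReal.ofReal (c₂ ^ Bcount T m n ω) ∂Q := by
  have hm' : (1 : ℝ) < m := by exact_mod_cast hm
  refine ⟨lowerConst m, upperConst m, lowerConst_mem_Ioo hm', upperConst_mem_Ioo hm', ?_⟩
  intro T _ hdeg n A hA hA0 P Q hP hQ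
  have hB (c : ℝ) (ω ω' : ℕ → List ℕ) (h : ∀ j ≤ 2 * n, ω j = ω' j) :
      ENNReal.ofReal (c ^ Bcount T m n ω) = ENNReal.ofReal (c ^ Bcount T m n ω') := by
    rw [Bcount_congr fun j hj => h j hj.le]
  rw [measure_eq_tsum_pathCylinder P hA, setLIntegral_eq_tsum_pathCylinder Q hA (hB _),
    setLIntegral_eq_tsum_pathCylinder Q hA (hB _), ← ENNReal.tsum_mul_left,
    ← ENNReal.tsum_mul_left]
  constructor
  · refine ENNReal.tsum_le_tsum fun p => ?_
    obtain ⟨h0, h2⟩ := hA0 _ p.2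
    rw [hP.measure_pathCylinder h0, hQ.measure_pathCylinder h0]
    exact (loop_prob_bounds (by omega) hdeg h0 h2).1
  · refine ENNReal.tsum_le_tsum fun p => ?_
    obtain ⟨h0, h2⟩ := hA0 _ p.2
    rw [hP.measure_pathCylinder h0, hQ.measure_pathCylinder h0]
    exact (loop_prob_bounds (by omega) hdeg h0 h2).2

end
end
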